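/- arXiv:1105.5729 — 4 statements merged into one kernel-verified Lean document; each statement's English description precedes it below -/
import Mathlib

section
/- For all parameters a₁ = (b₁, ε₁) and a₂ = (b₂, ε₂) in 𝔹 = 𝔻 × 𝕋, and all z ∈ ℂ such that all denominators involved are nonzero (in particular b̄₂z ≠ 1 and b̄z ≠ 1), the composition of Blaschke functions satisfies B_{a₁}(B_{a₂}(z)) = B_{(b,ε)}(z), where b = (b₁ε̄₂ + b₂)/(1 + b₁ b̄₂ ε̄₂) and ε = ε₁(ε₂ + b₁b̄₂)/(1 + ε₂ b̄₁ b₂). -/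
/-!
Clearing the denominator `1 - b̄₂ z` writes `B_{a₁}(B_{a₂}(z))` as a quotient of two affine
functions of `z`. Since `ε₂ ε̄₂ = 1`, multiplying numerator and denominator of `b` by `ε₂` gives
`b = (b₁ + ε₂ b₂) / (ε₂ + b₁ b̄₂)` and `b̄ = (ε₂ b̄₁ + b̄₂) / (1 + ε₂ b̄₁ b₂)`, and with these
`B_{(b,ε)}(z)` is the same quotient.
-/

open Complex ComplexConjugate

/-- The Blaschke function `B_{(b,ε)}(z) = ε (z - b) / (1 - conj b · z)`. -/
noncomputable def blaschke (b ε z : ℂ) : ℂ := ε * (z - b) / (1 - conj b * z)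

theorem blaschke_blaschke (b₁ ε₁ b₂ ε₂ : ℂ) {z : ℂ} (hz : 1 - conj b₂ * z ≠ 0) :
    blaschke b₁ ε₁ (blaschke b₂ ε₂ z) =
      ε₁ * ((ε₂ + b₁ * conj b₂) * z - (b₁ + ε₂ * b₂)) /
        (1 + ε₂ * conj b₁ * b₂ - (ε₂ * conj b₁ + conj b₂) * z) := by
  have hw : blaschke b₂ ε₂ z * (1 - conj b₂ * z) = ε₂ * (z - b₂) := div_mul_cancel₀ _ hz
  rw [blaschke, ← mul_div_mul_right _ _ hz]
  congr 1
  · linear_combination ε₁ * hw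
  · linear_combination -conj b₁ * hw

theorem blaschke_div_div {p q d r ε z : ℂ} (hp : p ≠ 0) (hd : d ≠ 0)
    (hconj : conj (q / p) = r / d) :
    blaschke (q / p) (ε * p / d) z = ε * (p * z - q) / (d - r * z) := by
  rw [blaschke, hconj, ← mul_div_mul_right _ _ hd]
  congr 1 <;> field_simp

theorem mul_conj_add_div_eq {ε : ℂ} (b₁ b₂ : ℂ) (hε : ‖ε‖ = 1) :
    (b₁ * conj ε + b₂) / (1 + b₁ * conj b₂ * conj ε) = (b₁ + ε * b₂) / (ε + b₁ * conj b₂) := by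
  have hε₀ : ε ≠ 0 := ne_zero_of_norm_ne_zero (hε.trans_ne one_ne_zero)
  rw [← inv_eq_conj hε, ← mul_div_mul_left _ _ hε₀]
  congr 1 <;> field_simp

theorem conj_add_mul_div_eq {ε : ℂ} (b₁ b₂ : ℂ) (hε : ‖ε‖ = 1) :
    conj ((b₁ + ε * b₂) / (ε + b₁ * conj b₂)) =
      (ε * conj b₁ + conj b₂) / (1 + ε * conj b₁ * b₂) := by
  have hε₀ : ε ≠ 0 := ne_zero_of_norm_ne_zero (hε.trans_ne one_ne_zero)
  simp only [map_div₀, map_add, map_mul, conj_conj, ← inv_eq_conj hε]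
  rw [← mul_div_mul_left _ _ hε₀]
  congr 1 <;> field_simp

theorem blaschke_comp_general (b₁ ε₁ b₂ ε₂ z : ℂ)
    (hε₂ : ‖ε₂‖ = 1)
    (hden₂ : 1 - conj b₂ * z ≠ 0)
    (hdenb : 1 + b₁ * conj b₂ * conj ε₂ ≠ 0)
    (hdenε : 1 + ε₂ * conj b₁ * b₂ ≠ 0) :
    blaschke b₁ ε₁ (blaschke b₂ ε₂ z) =
      blaschke ((b₁ * conj ε₂ + b₂) / (1 + b₁ * conj b₂ * conj ε₂))
        (ε₁ * (ε₂ + b₁ * conj b₂) / (1 + ε₂ * conj b₁ * b₂)) z := by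
  have hε₂₀ : ε₂ ≠ 0 := ne_zero_of_norm_ne_zero (hε₂.trans_ne one_ne_zero)
  have hp : ε₂ + b₁ * conj b₂ ≠ 0 := by
    have h : ε₂ + b₁ * conj b₂ = ε₂ * (1 + b₁ * conj b₂ * conj ε₂) := by
      rw [← inv_eq_conj hε₂]; field_simp
    rw [h]; exact mul_ne_zero hε₂₀ hdenb
  rw [blaschke_blaschke _ _ _ _ hden₂, mul_conj_add_div_eq _ _ hε₂,
    blaschke_div_div hp hdenε (conj_add_mul_div_eq _ _ hε₂)]

/-- Composition of Blaschke functions: `B_{a₁} ∘ B_{a₂} = B_{a₁ ∘ a₂}` where the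
parameter of the composition is given by the Blaschke group operation (1.3). -/
theorem blaschke_comp (b₁ ε₁ b₂ ε₂ z : ℂ)
    (hb₁ : ‖b₁‖ < 1) (hb₂ : ‖b₂‖ < 1)
    (hε₁ : ‖ε₁‖ = 1) (hε₂ : ‖ε₂‖ = 1)
    (hden₂ : 1 - conj b₂ * z ≠ 0)
    (hden₁ : 1 - conj b₁ * blaschke b₂ ε₂ z ≠ 0)
    (hdenb : 1 + b₁ * conj b₂ * conj ε₂ ≠ 0)
    (hdenε : 1 + ε₂ * conj b₁ * b₂ ≠ 0)
    (hden : 1 - conj ((b₁ * conj ε₂ + b₂) / (1 + b₁ * conj b₂ * conj ε₂)) * z ≠ 0) :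
    blaschke b₁ ε₁ (blaschke b₂ ε₂ z) =
      blaschke ((b₁ * conj ε₂ + b₂) / (1 + b₁ * conj b₂ * conj ε₂))
        (ε₁ * (ε₂ + b₁ * conj b₂) / (1 + ε₂ * conj b₁ * b₂)) z :=
  blaschke_comp_general b₁ ε₁ b₂ ε₂ z hε₂ hden₂ hdenb hdenε
end

section
/- (Theorem 2.1, part 1) Let a > 1, let (N(k))_{k≥1} be an increasing sequence of natural numbers with N(0) = 1, and suppose the sequence (N(k)a^{−2k})_{k≥1} is increasing with finite limit α = lim_{k→∞} N(k)a^{−2k} < ∞. Then the set 𝒜 = {z_{kℓ} = r_k e^{2πiℓ/N(k)} : k ∈ ℕ, 0 ≤ ℓ ≤ N(k)−1} is uniformly discrete: there exists δ > 0 such that ρ(z, w) ≥ δ for all distinct points z, w ∈ 𝒜. -/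
open Complex ComplexConjugate Filter

/-- `r_k = (aᵏ - a⁻ᵏ)/(aᵏ + a⁻ᵏ)`, `k ∈ ℕ`. -/
noncomputable def rPt (a : ℝ) (k : ℕ) : ℝ := (a ^ k - (a ^ k)⁻¹) / (a ^ k + (a ^ k)⁻¹)

/-- The sampling nodes `z_{kℓ} = r_k · exp(2πiℓ/N(k))`. -/
noncomputable def zPt (a : ℝ) (N : ℕ → ℕ) (k ℓ : ℕ) : ℂ :=
  (rPt a k : ℂ) * Complex.exp (2 * Real.pi * Complex.I * ℓ / N k)

/-!
The identity `|1 - w̄z|² = |z - w|² + (1 - |z|²)(1 - |w|²)` shows that `ρ(z, w) ≥ μ / (μ + 1)`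
as soon as `μ² (1 - |z|²)(1 - |w|²) ≤ |z - w|²`, so it suffices to find one such `μ > 0`.

Since `r_k = tanh (k log a)`, for nodes on different circles `j < k` we have
`|z - w| ≥ r_k - r_j = sinh ((k - j) log a) · √((1 - r_k²)(1 - r_j²))`, and
`sinh ((k - j) log a) ≥ sinh (log a) = (a - a⁻¹) / 2`.
Distinct nodes on the circle of radius `r_k` are at distance at least `4 r_k / N(k)`, while
`1 - r_k² ≤ 4 a^{-2k}`; as the convergent sequence `N(k) a^{-2k}` is bounded by some `C`, this gives
`μ = (1 - a⁻⁴) / C` for `k ≥ 1`, and the circle `k = 0` is the single point `0`.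
-/

lemma norm_one_sub_conj_mul_sq (z w : ℂ) :
    ‖1 - conj w * z‖ ^ 2 = ‖z - w‖ ^ 2 + (1 - ‖z‖ ^ 2) * (1 - ‖w‖ ^ 2) := by
  simp only [Complex.sq_norm, Complex.normSq_apply, Complex.sub_re, Complex.sub_im,
    Complex.mul_re, Complex.mul_im, Complex.one_re, Complex.one_im, Complex.conj_re,
    Complex.conj_im]
  ring

lemma div_add_one_le_pseudohyperbolic {z w : ℂ} {μ : ℝ} (hz : ‖z‖ ≤ 1) (hw : ‖w‖ ≤ 1)
    (hzw : z ≠ w) (hμ : 0 < μ)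
    (h : μ ^ 2 * ((1 - ‖z‖ ^ 2) * (1 - ‖w‖ ^ 2)) ≤ ‖z - w‖ ^ 2) :
    μ / (μ + 1) ≤ ‖z - w‖ / ‖1 - conj w * z‖ := by
  have hd : 0 < ‖z - w‖ := norm_pos_iff.2 (sub_ne_zero.2 hzw)
  have hP : 0 ≤ (1 - ‖z‖ ^ 2) * (1 - ‖w‖ ^ 2) :=
    mul_nonneg (by nlinarith [norm_nonneg z]) (by nlinarith [norm_nonneg w])
  have hD := norm_one_sub_conj_mul_sq z w
  have hdD : ‖z - w‖ ≤ ‖1 - conj w * z‖ :=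
    (pow_le_pow_iff_left₀ hd.le (norm_nonneg _) two_ne_zero).1 (by linarith)
  rw [div_le_div_iff₀ (by positivity) (hd.trans_le hdD)]
  refine (pow_le_pow_iff_left₀ (by positivity) (by positivity) two_ne_zero).1 ?_
  nlinarith

lemma Filter.Tendsto.exists_pos_le_mul {u v : ℕ → ℝ} {α : ℝ} (hv : ∀ k, 0 < v k)
    (h : Tendsto (fun k ↦ u k * (v k)⁻¹) atTop (nhds α)) :
    ∃ C > 0, ∀ k, u k ≤ C * v k := by
  obtain ⟨C, hC⟩ := h.bddAbove_range
  refine ⟨max C 1, by positivity, fun k ↦ ?_⟩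
  have hk : u k * (v k)⁻¹ ≤ C := hC ⟨k, rfl⟩
  rw [mul_inv_le_iff₀ (hv k)] at hk
  exact hk.trans (mul_le_mul_of_nonneg_right (le_max_left C 1) (hv k).le)

lemma two_div_le_sin_pi_mul_div {d n : ℕ} (hd : 0 < d) (hdn : d < n) :
    2 / n ≤ Real.sin (Real.pi * d / n) := by
  have hn : (0 : ℝ) < n := by exact_mod_cast hd.trans hdn
  wlog h : 2 * d ≤ n generalizing d
  · have hsym : Real.pi * d / n = Real.pi - Real.pi * (n - d : ℕ) / n := by
      rw [Nat.cast_sub hdn.le]; field_simp; ring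
    rw [hsym, Real.sin_pi_sub]
    exact this (by omega) (by omega) (by omega)
  have hd1 : (1 : ℝ) ≤ d := by exact_mod_cast hd
  have h2d : (2 * d : ℝ) ≤ n := by exact_mod_cast h
  calc 2 / (n : ℝ) ≤ 2 / Real.pi * (Real.pi * d / n) := by
        rw [show 2 / Real.pi * (Real.pi * d / n) = 2 * d / n by field_simp]
        gcongr; linarith
    _ ≤ Real.sin (Real.pi * d / n) := by
        refine Real.mul_le_sin (by positivity) ?_
        rw [div_le_div_iff₀ hn two_pos]
        nlinarith [Real.pi_pos]

lemma norm_exp_two_pi_I_mul_div (ℓ n : ℕ) : ‖exp (2 * Real.pi * I * ℓ / n)‖ = 1 := by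
  rw [show 2 * Real.pi * I * ℓ / n = ↑(2 * Real.pi * ℓ / n) * I by push_cast; ring]
  exact norm_exp_ofReal_mul_I _

lemma four_div_le_norm_exp_sub_exp {n ℓ m : ℕ} (hℓ : ℓ < n) (hm : m < n) (hne : ℓ ≠ m) :
    4 / n ≤ ‖exp (2 * Real.pi * I * ℓ / n) - exp (2 * Real.pi * I * m / n)‖ := by
  wlog h : m < ℓ generalizing ℓ m
  · rw [norm_sub_rev]; exact this hm hℓ hne.symm (by omega)
  obtain ⟨d, rfl⟩ := Nat.exists_eq_add_of_lt h
  have hfactor : exp (2 * Real.pi * I * ↑(m + d + 1) / n) - exp (2 * Real.pi * I * m / n) =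
      exp (↑(2 * Real.pi * m / n) * I) * (exp (I * ↑(2 * Real.pi * ↑(d + 1) / n)) - 1) := by
    rw [mul_sub, ← Complex.exp_add, mul_one]
    push_cast
    ring_nf
  rw [hfactor, norm_mul, norm_exp_ofReal_mul_I, one_mul, norm_exp_I_mul_ofReal_sub_one,
    norm_mul, Real.norm_two, Real.norm_eq_abs,
    show 2 * Real.pi * ↑(d + 1) / n / 2 = Real.pi * ↑(d + 1) / n by ring]
  have hsin := two_div_le_sin_pi_mul_div (d := d + 1) (n := n) (by omega) (by omega)
  rw [show (4 : ℝ) / n = 2 * (2 / n) by ring]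
  gcongr
  exact hsin.trans (le_abs_self _)

lemma rPt_zero (a : ℝ) : rPt a 0 = 0 := by simp [rPt]

lemma zPt_zero (a : ℝ) (N : ℕ → ℕ) (ℓ : ℕ) : zPt a N 0 ℓ = 0 := by
  simp [zPt, rPt_zero]

section Radii

variable {a : ℝ}

lemma rPt_nonneg (ha : 1 ≤ a) (k : ℕ) : 0 ≤ rPt a k := by
  have ht : 1 ≤ a ^ k := one_le_pow₀ ha
  exact div_nonneg (sub_nonneg.2 ((inv_le_one_of_one_le₀ ht).trans ht)) (by positivity)

lemma rPt_le_one (ha : 0 < a) (k : ℕ) : rPt a k ≤ 1 := by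
  have ht : 0 < a ^ k := pow_pos ha k
  rw [rPt, div_le_one (by positivity)]
  linarith [inv_pos.2 ht]

lemma one_sub_rPt_sq (ha : 0 < a) (k : ℕ) :
    1 - rPt a k ^ 2 = (2 / (a ^ k + (a ^ k)⁻¹)) ^ 2 := by
  have ht : 0 < a ^ k := pow_pos ha k
  rw [rPt]
  field_simp
  ring

lemma rPt_sub_rPt (ha : 0 < a) (j k : ℕ) :
    rPt a k - rPt a j = 2 * (a ^ k / a ^ j - a ^ j / a ^ k) /
      ((a ^ k + (a ^ k)⁻¹) * (a ^ j + (a ^ j)⁻¹)) := by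
  have hs : 0 < a ^ j := pow_pos ha j
  have ht : 0 < a ^ k := pow_pos ha k
  rw [rPt, rPt]
  field_simp
  ring

lemma sq_mul_one_sub_rPt_sq_le_rPt_sub_rPt_sq (ha : 1 < a) {j k : ℕ} (hjk : j < k) :
    ((a - a⁻¹) / 2) ^ 2 * ((1 - rPt a k ^ 2) * (1 - rPt a j ^ 2)) ≤ (rPt a k - rPt a j) ^ 2 := by
  have ha0 : 0 < a := one_pos.trans ha
  have hu : a ≤ a ^ k / a ^ j := by
    rw [div_eq_mul_inv, ← pow_sub₀ _ ha0.ne' hjk.le]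
    exact le_self_pow₀ ha.le (by omega)
  have hgap : 0 ≤ a - a⁻¹ := sub_nonneg.2 ((inv_le_one_of_one_le₀ ha.le).trans ha.le)
  have hgrow : a - a⁻¹ ≤ a ^ k / a ^ j - (a ^ k / a ^ j)⁻¹ := sub_le_sub hu (inv_anti₀ ha0 hu)
  rw [one_sub_rPt_sq ha0, one_sub_rPt_sq ha0, rPt_sub_rPt ha0, ← inv_div (a ^ k)]
  have hT : 0 < a ^ k + (a ^ k)⁻¹ := by positivity
  have hS : 0 < a ^ j + (a ^ j)⁻¹ := by positivity
  generalize a ^ k + (a ^ k)⁻¹ = T, a ^ j + (a ^ j)⁻¹ = S at hT hS ⊢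
  calc _ = (2 * (a - a⁻¹) / (T * S)) ^ 2 := by ring
    _ ≤ _ := by gcongr

lemma mul_one_sub_rPt_sq_le_rPt_mul {C n : ℝ} (ha : 1 < a) (hC : 0 < C) {k : ℕ} (hk : k ≠ 0)
    (hn : 0 < n) (hnk : n ≤ C * a ^ (2 * k)) :
    (1 - (a ^ 4)⁻¹) / C * (1 - rPt a k ^ 2) ≤ rPt a k * (4 / n) := by
  have ha0 : 0 < a := one_pos.trans ha
  have ht : a ≤ a ^ k := le_self_pow₀ ha.le hk
  rw [one_sub_rPt_sq ha0, rPt]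
  rw [mul_comm 2 k, pow_mul] at hnk
  generalize a ^ k = t at ht hnk ⊢
  have ht0 : 0 < t := ha0.trans_le ht
  have hdecay : (t ^ 2)⁻¹ ≤ (a ^ 4)⁻¹ * t ^ 2 := by
    rw [inv_mul_eq_div, inv_eq_one_div, div_le_div_iff₀ (by positivity) (by positivity)]
    nlinarith [pow_le_pow_left₀ ha0.le ht 4]
  have hcount : (1 - (a ^ 4)⁻¹) * n ≤ C * ((t - t⁻¹) * (t + t⁻¹)) :=
    calc (1 - (a ^ 4)⁻¹) * n ≤ (1 - (a ^ 4)⁻¹) * (C * t ^ 2) := by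
          gcongr; exact sub_nonneg.2 (inv_le_one_of_one_le₀ (one_le_pow₀ ha.le))
      _ ≤ C * (t ^ 2 - (t ^ 2)⁻¹) := by nlinarith
      _ = C * ((t - t⁻¹) * (t + t⁻¹)) := by ring
  calc (1 - (a ^ 4)⁻¹) / C * (2 / (t + t⁻¹)) ^ 2
      = 4 * ((1 - (a ^ 4)⁻¹) * n) / (C * (t + t⁻¹) ^ 2 * n) := by
        field_simp; norm_num
    _ ≤ 4 * (C * ((t - t⁻¹) * (t + t⁻¹))) / (C * (t + t⁻¹) ^ 2 * n) := by gcongr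
    _ = (t - t⁻¹) / (t + t⁻¹) * (4 / n) := by field_simp

end Radii

section Nodes

variable {a : ℝ} {N : ℕ → ℕ}

lemma norm_zPt (ha : 1 ≤ a) (k ℓ : ℕ) : ‖zPt a N k ℓ‖ = rPt a k := by
  rw [zPt, norm_mul, norm_exp_two_pi_I_mul_div, mul_one, Complex.norm_real,
    Real.norm_of_nonneg (rPt_nonneg ha k)]

lemma norm_zPt_sub_zPt (ha : 1 ≤ a) (k ℓ m : ℕ) :
    ‖zPt a N k ℓ - zPt a N k m‖ =
      rPt a k * ‖exp (2 * Real.pi * I * ℓ / N k) - exp (2 * Real.pi * I * m / N k)‖ := by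
  rw [zPt, zPt, ← mul_sub, norm_mul, Complex.norm_real, Real.norm_of_nonneg (rPt_nonneg ha k)]

lemma sq_mul_one_sub_rPt_sq_le_norm_zPt_sub_zPt_sq {C : ℝ} (ha : 1 < a) (hC : 0 < C)
    {k ℓ m : ℕ} (hk : k ≠ 0) (hNk : (N k : ℝ) ≤ C * a ^ (2 * k)) (hℓ : ℓ < N k)
    (hm : m < N k) (hne : ℓ ≠ m) :
    ((1 - (a ^ 4)⁻¹) / C) ^ 2 * ((1 - rPt a k ^ 2) * (1 - rPt a k ^ 2)) ≤
      ‖zPt a N k ℓ - zPt a N k m‖ ^ 2 := by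
  have hn : (0 : ℝ) < N k := by exact_mod_cast hm.trans_le' (Nat.zero_le m)
  have hr : 0 ≤ rPt a k := rPt_nonneg ha.le k
  have hr1 : 0 ≤ 1 - rPt a k ^ 2 := by rw [one_sub_rPt_sq (one_pos.trans ha)]; positivity
  have hgap : 0 ≤ 1 - (a ^ 4)⁻¹ := sub_nonneg.2 (inv_le_one_of_one_le₀ (one_le_pow₀ ha.le))
  have hchord : rPt a k * (4 / N k) ≤ ‖zPt a N k ℓ - zPt a N k m‖ := by
    rw [norm_zPt_sub_zPt ha.le]
    exact mul_le_mul_of_nonneg_left (four_div_le_norm_exp_sub_exp hℓ hm hne) hr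
  calc _ = ((1 - (a ^ 4)⁻¹) / C * (1 - rPt a k ^ 2)) ^ 2 := by ring
    _ ≤ (rPt a k * (4 / N k)) ^ 2 :=
      pow_le_pow_left₀ (by positivity) (mul_one_sub_rPt_sq_le_rPt_mul ha hC hk hn hNk) 2
    _ ≤ _ := pow_le_pow_left₀ (by positivity) hchord 2

end Nodes

lemma sq_mul_le_norm_zPt_sub_zPt_sq {a C μ : ℝ} {N : ℕ → ℕ} (ha : 1 < a) (hC : 0 < C)
    (hN : ∀ k, (N k : ℝ) ≤ C * a ^ (2 * k)) (hμ : 0 ≤ μ) (hμa : μ ≤ (a - a⁻¹) / 2)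
    (hμC : μ ≤ (1 - (a ^ 4)⁻¹) / C) {j k ℓ m : ℕ} (hℓ : ℓ < N k) (hm : m < N j)
    (hne : zPt a N k ℓ ≠ zPt a N j m) :
    μ ^ 2 * ((1 - ‖zPt a N k ℓ‖ ^ 2) * (1 - ‖zPt a N j m‖ ^ 2)) ≤
      ‖zPt a N k ℓ - zPt a N j m‖ ^ 2 := by
  wlog hjk : j ≤ k generalizing j k ℓ m
  · rw [mul_comm (1 - _), norm_sub_rev]
    exact this hm hℓ hne.symm (by omega)
  rw [norm_zPt ha.le, norm_zPt ha.le]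
  have hP : 0 ≤ (1 - rPt a k ^ 2) * (1 - rPt a j ^ 2) := by
    rw [one_sub_rPt_sq (one_pos.trans ha), one_sub_rPt_sq (one_pos.trans ha)]; positivity
  rcases hjk.lt_or_eq with hjk | rfl
  · calc _ ≤ ((a - a⁻¹) / 2) ^ 2 * ((1 - rPt a k ^ 2) * (1 - rPt a j ^ 2)) := by gcongr
      _ ≤ (rPt a k - rPt a j) ^ 2 := sq_mul_one_sub_rPt_sq_le_rPt_sub_rPt_sq ha hjk
      _ = |‖zPt a N k ℓ‖ - ‖zPt a N j m‖| ^ 2 := by rw [sq_abs, norm_zPt ha.le, norm_zPt ha.le]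
      _ ≤ _ := pow_le_pow_left₀ (abs_nonneg _) (abs_norm_sub_norm_le _ _) 2
  · have hk : j ≠ 0 := by rintro rfl; exact hne (by rw [zPt_zero, zPt_zero])
    have hℓm : ℓ ≠ m := by rintro rfl; exact hne rfl
    calc _ ≤ ((1 - (a ^ 4)⁻¹) / C) ^ 2 * ((1 - rPt a j ^ 2) * (1 - rPt a j ^ 2)) := by gcongr
      _ ≤ _ := sq_mul_one_sub_rPt_sq_le_norm_zPt_sub_zPt_sq ha hC hk (hN j) hℓ hm hℓm

theorem nodes_uniformly_discrete_general (a : ℝ) (ha : 1 < a) (N : ℕ → ℕ)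
    (α : ℝ)
    (hα : Tendsto (fun k : ℕ => (N k : ℝ) * (a ^ (2 * k))⁻¹) atTop (nhds α)) :
    ∃ δ > 0, ∀ z ∈ {w : ℂ | ∃ k ℓ, ℓ < N k ∧ w = zPt a N k ℓ},
      ∀ w ∈ {w : ℂ | ∃ k ℓ, ℓ < N k ∧ w = zPt a N k ℓ}, z ≠ w →
        δ ≤ ‖z - w‖ / ‖1 - conj w * z‖ := by
  have ha0 : 0 < a := one_pos.trans ha
  obtain ⟨C, hC, hN⟩ := hα.exists_pos_le_mul fun k ↦ pow_pos ha0 (2 * k)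
  set μ := min ((a - a⁻¹) / 2) ((1 - (a ^ 4)⁻¹) / C)
  have hμ : 0 < μ := lt_min (by linarith [inv_lt_one_of_one_lt₀ ha])
    (div_pos (by linarith [inv_lt_one_of_one_lt₀ (one_lt_pow₀ ha (n := 4) (by norm_num))]) hC)
  refine ⟨μ / (μ + 1), by positivity, ?_⟩
  rintro _ ⟨k, ℓ, hℓ, rfl⟩ _ ⟨j, m, hm, rfl⟩ hne
  refine div_add_one_le_pseudohyperbolic ?_ ?_ hne hμ
    (sq_mul_le_norm_zPt_sub_zPt_sq ha hC hN hμ.le (min_le_left _ _) (min_le_right _ _) hℓ hm hne)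
  all_goals rw [norm_zPt ha.le]; exact rPt_le_one ha0 _

/-- Theorem 2.1, part 1: if `a > 1`, `(N(k))_{k ≥ 1}` is an increasing sequence of
natural numbers with `N(0) = 1`, and `(N(k) a^{-2k})_{k ≥ 1}` is increasing with
finite limit `α`, then `𝒜 = {z_{kℓ}}` is uniformly discrete: there is `δ > 0`
with `ρ(z, w) ≥ δ` for all distinct `z, w ∈ 𝒜`. -/
theorem nodes_uniformly_discrete (a : ℝ) (ha : 1 < a) (N : ℕ → ℕ) (hN0 : N 0 = 1)
    (hNmono : ∀ k, 1 ≤ k → N k ≤ N (k + 1))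
    (hmono : ∀ k, 1 ≤ k →
      (N k : ℝ) * (a ^ (2 * k))⁻¹ ≤ (N (k + 1) : ℝ) * (a ^ (2 * (k + 1)))⁻¹)
    (α : ℝ)
    (hα : Tendsto (fun k : ℕ => (N k : ℝ) * (a ^ (2 * k))⁻¹) atTop (nhds α)) :
    ∃ δ > 0, ∀ z ∈ {w : ℂ | ∃ k ℓ, ℓ < N k ∧ w = zPt a N k ℓ},
      ∀ w ∈ {w : ℂ | ∃ k ℓ, ℓ < N k ∧ w = zPt a N k ℓ}, z ≠ w →
        δ ≤ ‖z - w‖ / ‖1 - conj w * z‖ :=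
  nodes_uniformly_discrete_general a ha N α hα
end

section
/- (Theorem 2.1, part 2) Let a > 1, let (N(k))_{k≥1} be natural numbers with N(0) = 1, and suppose the sequence (N(k)a^{−2k})_{k≥1} is decreasing with limit α ∈ (0, ∞). Set K = 1 + (a − a⁻¹)²/4 + π²a²/(4α²) and ε₀ = √(1 − 1/K). Then ε₀ ∈ (0,1) and for every z ∈ 𝔻 there exists a point w ∈ 𝒜 with ρ(z, w) ≤ ε₀; in particular 𝒜 is an ε-net for every ε ∈ (ε₀, 1). -/
/-!
Write `z = tanh s · e^{iθ}` and a node as `w = tanh t · e^{iψ}`, where `r_k = tanh (k log a)`.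
Since `|z - w|² = |1 - w̄z|² - (1 - |z|²)(1 - |w|²)`, the bound `ρ(z, w) ≤ √(1 - 1/K)` amounts to
`|1 - w̄z|² ≤ K (1 - |z|²)(1 - |w|²)`, and by the hyperbolic law of cosines the ratio of the two
sides is `cosh²(s - t) + sinh 2s · sinh 2t · (1 - cos (θ - ψ)) / 2`. Taking the circle with
`t ≤ s ≤ t + log a` bounds the first term by `cosh² (log a) = 1 + (a - a⁻¹)²/4`; taking the
nearest of its `N(k) ≥ α a^{2k} = α e^{2t}` equally spaced nodes gives
`1 - cos (θ - ψ) ≤ π²/(2N(k)²)`, which bounds the second term by `π² e^{2(s-t)}/(16α²) ≤ π²a²/(16α²)`.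
-/

open Complex ComplexConjugate Filter

open scoped Real

theorem Complex.normSq_sub_eq_normSq_one_sub_conj_mul (z w : ℂ) :
    normSq (z - w) = normSq (1 - conj w * z) - (1 - normSq z) * (1 - normSq w) := by
  simp only [normSq_apply, sub_re, sub_im, mul_re, mul_im, one_re, one_im, conj_re, conj_im]
  ring

theorem norm_sub_div_norm_one_sub_conj_mul_le_sqrt {z w : ℂ} {K : ℝ} (hz : ‖z‖ < 1) (hw : ‖w‖ < 1)
    (hK : normSq (1 - conj w * z) ≤ K * ((1 - normSq z) * (1 - normSq w))) :
    ‖z - w‖ / ‖1 - conj w * z‖ ≤ √(1 - 1 / K) := by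
  have hD : 0 < normSq (1 - conj w * z) := by
    refine normSq_pos.2 (sub_ne_zero.2 fun h => ?_)
    have : ‖conj w * z‖ < 1 := by
      rw [norm_mul, RCLike.norm_conj]
      exact mul_lt_one_of_nonneg_of_lt_one_left (norm_nonneg w) hw hz.le
    rw [← h, norm_one] at this
    exact lt_irrefl _ this
  have hP : 0 < (1 - normSq z) * (1 - normSq w) := by
    rw [← Complex.sq_norm, ← Complex.sq_norm]
    have := norm_nonneg z; have := norm_nonneg w
    exact mul_pos (by nlinarith) (by nlinarith)
  have hKpos : 0 < K := pos_of_mul_pos_left (hD.trans_le hK) hP.le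
  rw [Complex.norm_def, Complex.norm_def, ← Real.sqrt_div (normSq_nonneg _)]
  refine Real.sqrt_le_sqrt ?_
  rw [Complex.normSq_sub_eq_normSq_one_sub_conj_mul, div_le_iff₀ hD]
  have : normSq (1 - conj w * z) / K ≤ (1 - normSq z) * (1 - normSq w) := by
    rwa [div_le_iff₀' hKpos]
  calc _ ≤ normSq (1 - conj w * z) - normSq (1 - conj w * z) / K := by linarith
    _ = _ := by ring

theorem Complex.normSq_one_sub_ofReal_mul_exp (x φ : ℝ) :
    normSq (1 - x * exp (φ * I)) = 1 - 2 * x * Real.cos φ + x ^ 2 := by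
  simp only [normSq_apply, sub_re, sub_im, one_re, one_im, re_ofReal_mul, im_ofReal_mul,
    exp_ofReal_mul_I_re, exp_ofReal_mul_I_im]
  linear_combination x ^ 2 * Real.sin_sq_add_cos_sq φ

theorem Complex.conj_ofReal_mul_exp_mul_ofReal_mul_exp (x y θ ψ : ℝ) :
    conj ((y : ℂ) * exp (ψ * I)) * ((x : ℂ) * exp (θ * I)) =
      ((x * y : ℝ) : ℂ) * exp ((θ - ψ : ℝ) * I) := by
  rw [map_mul, conj_ofReal, ← exp_conj, map_mul, conj_ofReal, conj_I]
  push_cast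
  rw [sub_mul, Complex.exp_sub, div_eq_mul_inv, ← Complex.exp_neg]
  ring_nf

theorem Complex.normSq_ofReal_mul_exp_mul_I (x θ : ℝ) : normSq (x * exp (θ * I)) = x ^ 2 := by
  rw [Complex.normSq_mul, Complex.normSq_ofReal, ← Complex.sq_norm (exp _),
    Complex.norm_exp_ofReal_mul_I]
  ring

theorem Real.one_sub_tanh_sq (x : ℝ) : 1 - Real.tanh x ^ 2 = (Real.cosh x ^ 2)⁻¹ := by
  have := Real.cosh_pos x
  rw [Real.tanh_eq_sinh_div_cosh]
  field_simp
  linear_combination Real.cosh_sq x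

theorem normSq_one_sub_conj_tanh_mul_exp (s t θ ψ : ℝ) :
    normSq (1 - conj ((Real.tanh t : ℂ) * exp (ψ * I)) * ((Real.tanh s : ℂ) * exp (θ * I))) =
      (Real.cosh (s - t) ^ 2 + Real.sinh (2 * s) * Real.sinh (2 * t) * (1 - Real.cos (θ - ψ)) / 2) *
        ((1 - Real.tanh s ^ 2) * (1 - Real.tanh t ^ 2)) := by
  rw [Complex.conj_ofReal_mul_exp_mul_ofReal_mul_exp, Complex.normSq_one_sub_ofReal_mul_exp,
    Real.one_sub_tanh_sq, Real.one_sub_tanh_sq]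
  have hs := Real.cosh_pos s
  have ht := Real.cosh_pos t
  simp only [Real.tanh_eq_sinh_div_cosh, Real.cosh_sub, Real.sinh_two_mul]
  field_simp
  ring

theorem Real.sinh_le_exp_div_two (x : ℝ) : Real.sinh x ≤ Real.exp x / 2 := by
  rw [Real.sinh_eq]
  linarith [Real.exp_pos (-x)]

theorem cosh_sq_le_of_le_log {a x : ℝ} (ha : 0 < a) (hx : 0 ≤ x) (hxa : x ≤ Real.log a) :
    Real.cosh x ^ 2 ≤ 1 + (a - a⁻¹) ^ 2 / 4 := by
  have hcosh : Real.cosh x ≤ Real.cosh (Real.log a) :=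
    Real.cosh_le_cosh.2 (by rwa [abs_of_nonneg hx, abs_of_nonneg (hx.trans hxa)])
  calc Real.cosh x ^ 2 ≤ Real.cosh (Real.log a) ^ 2 := by
        gcongr
    _ = 1 + (a - a⁻¹) ^ 2 / 4 := by
        rw [Real.cosh_log ha]; field_simp; ring

theorem sinh_mul_sinh_mul_one_sub_cos_le {a α n s t φ : ℝ} (ha : 0 < a) (hα : 0 < α)
    (ht : 0 ≤ t) (hts : t ≤ s) (hsa : s ≤ t + Real.log a)
    (hn : 0 < t → α * Real.exp (2 * t) ≤ n) (hφ : Real.cos (π / n) ≤ Real.cos φ) :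
    Real.sinh (2 * s) * Real.sinh (2 * t) * (1 - Real.cos φ) / 2 ≤
      π ^ 2 * a ^ 2 / (16 * α ^ 2) := by
  rcases ht.eq_or_lt with rfl | ht
  · simp only [mul_zero, Real.sinh_zero, zero_mul, zero_div]; positivity
  have hn' : α * Real.exp (2 * t) ≤ n := hn ht
  have hn0 : 0 < n := (mul_pos hα (Real.exp_pos _)).trans_le hn'
  have hcos : 1 - Real.cos φ ≤ (π / n) ^ 2 / 2 := by
    linarith [Real.one_sub_sq_div_two_le_cos (x := π / n)]
  have hratio : Real.exp (2 * s) / Real.exp (2 * t) ≤ a ^ 2 := by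
    rw [← Real.exp_sub, ← Real.exp_log ha, ← Real.exp_nat_mul]
    gcongr
    push_cast; linarith
  have hprod : Real.sinh (2 * s) * Real.sinh (2 * t) ≤
      Real.exp (2 * s) / 2 * (Real.exp (2 * t) / 2) :=
    mul_le_mul (Real.sinh_le_exp_div_two _) (Real.sinh_le_exp_div_two _)
      (Real.sinh_nonneg_iff.2 (by linarith)) (by positivity)
  have hcos0 : 0 ≤ 1 - Real.cos φ := by linarith [Real.cos_le_one φ]
  calc Real.sinh (2 * s) * Real.sinh (2 * t) * (1 - Real.cos φ) / 2
      ≤ Real.exp (2 * s) / 2 * (Real.exp (2 * t) / 2) * ((π / n) ^ 2 / 2) / 2 := by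
        gcongr ?_ * ?_ / 2
    _ ≤ Real.exp (2 * s) / 2 * (Real.exp (2 * t) / 2) *
          ((π / (α * Real.exp (2 * t))) ^ 2 / 2) / 2 := by
        gcongr
    _ = Real.exp (2 * s) / Real.exp (2 * t) * π ^ 2 / (16 * α ^ 2) := by
        field_simp; norm_num
    _ ≤ π ^ 2 * a ^ 2 / (16 * α ^ 2) := by
        rw [mul_comm (π ^ 2)]
        gcongr

theorem exists_lt_cos_pi_div_le_cos_sub {n : ℕ} (hn : n ≠ 0) (θ : ℝ) :
    ∃ ℓ < n, Real.cos (π / n) ≤ Real.cos (θ - 2 * π * ℓ / n) := by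
  have hn0 : (0 : ℝ) < n := by positivity
  set q := round (θ * n / (2 * π))
  have hclose : |θ - 2 * π * q / n| ≤ π / n := by
    have e : θ - 2 * π * q / n = 2 * π / n * (θ * n / (2 * π) - q) := by
      field_simp
    rw [e, abs_mul, abs_of_pos (by positivity)]
    calc 2 * π / n * |θ * n / (2 * π) - q| ≤ 2 * π / n * (1 / 2) := by
          gcongr; exact abs_sub_round _
      _ = π / n := by ring
  have hℓ : (((q % n).toNat : ℕ) : ℝ) = q - (q / n : ℤ) * n := by
    have : ((q % n).toNat : ℤ) = q - q / n * n := by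
      rw [Int.toNat_of_nonneg (Int.emod_nonneg q (by omega)), Int.emod_def, mul_comm]
    exact_mod_cast congrArg (Int.cast : ℤ → ℝ) this
  refine ⟨(q % n).toNat, by have := Int.emod_lt_of_pos q (by omega : (0 : ℤ) < n); omega, ?_⟩
  have hperiod : θ - 2 * π * (q % n).toNat / n = θ - 2 * π * q / n + (q / n : ℤ) * (2 * π) := by
    rw [hℓ]; field_simp; ring
  rw [hperiod, Real.cos_add_int_mul_two_pi, ← Real.cos_abs (θ - _)]
  exact Real.cos_le_cos_of_nonneg_of_le_pi (abs_nonneg _)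
    (div_le_self Real.pi_pos.le (Nat.one_le_cast.2 (Nat.one_le_iff_ne_zero.2 hn))) hclose

theorem le_of_tendsto_of_succ_le {β : Type*} [TopologicalSpace β] [Preorder β]
    [OrderClosedTopology β] {f : ℕ → β} {b : β} (hf : ∀ k, 1 ≤ k → f (k + 1) ≤ f k)
    (h : Tendsto f atTop (nhds b)) {k : ℕ} (hk : 1 ≤ k) : b ≤ f k := by
  obtain ⟨j, rfl⟩ := Nat.exists_eq_add_of_le' hk
  have hanti : Antitone fun i => f (i + 1) :=
    antitone_nat_of_succ_le fun i => hf (i + 1) (Nat.le_add_left 1 i)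
  exact hanti.le_of_tendsto ((tendsto_add_atTop_iff_nat 1).2 h) j

theorem rPt_eq_tanh {a : ℝ} (ha : 0 < a) (k : ℕ) : rPt a k = Real.tanh (k * Real.log a) := by
  rw [rPt, Real.tanh_eq, Real.exp_neg, Real.exp_nat_mul, Real.exp_log ha]

theorem zPt_eq {a : ℝ} (ha : 0 < a) (N : ℕ → ℕ) (k ℓ : ℕ) :
    zPt a N k ℓ = Real.tanh (k * Real.log a) * exp ((2 * π * ℓ / N k : ℝ) * I) := by
  rw [zPt, rPt_eq_tanh ha]
  push_cast
  ring_nf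

theorem norm_zPt_lt_one {a : ℝ} (ha : 0 < a) (N : ℕ → ℕ) (k ℓ : ℕ) : ‖zPt a N k ℓ‖ < 1 := by
  rw [zPt_eq ha, norm_mul, Complex.norm_exp_ofReal_mul_I, mul_one, Complex.norm_real,
    Real.norm_eq_abs]
  exact Real.abs_tanh_lt_one _

theorem exists_zPt_normSq_one_sub_conj_mul_le {a α : ℝ} {N : ℕ → ℕ} (ha : 1 < a) (hα : 0 < α)
    (hN0 : N 0 ≠ 0) (hN : ∀ k, 1 ≤ k → α * a ^ (2 * k) ≤ N k) {z : ℂ} (hz : ‖z‖ < 1) :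
    ∃ k, ∃ ℓ < N k, normSq (1 - conj (zPt a N k ℓ) * z) ≤
      (1 + (a - a⁻¹) ^ 2 / 4 + π ^ 2 * a ^ 2 / (4 * α ^ 2)) *
        ((1 - normSq z) * (1 - normSq (zPt a N k ℓ))) := by
  have ha0 : 0 < a := one_pos.trans ha
  have hlog : 0 < Real.log a := Real.log_pos ha
  set s := Real.artanh ‖z‖
  have hs : 0 ≤ s := Real.artanh_nonneg (norm_nonneg z)
  set θ := arg z
  have hzs : z = Real.tanh s * exp (θ * I) := by
    rw [Real.tanh_artanh ⟨by linarith [norm_nonneg z], hz⟩, norm_mul_exp_arg_mul_I]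
  set k := ⌊s / Real.log a⌋₊
  set t := k * Real.log a
  have ht : 0 ≤ t := by positivity
  have hts : t ≤ s := (le_div_iff₀ hlog).1 (Nat.floor_le (by positivity))
  have hst : s ≤ t + Real.log a := by
    have := Nat.lt_floor_add_one (s / Real.log a)
    rw [div_lt_iff₀ hlog] at this
    linarith
  have hNk : 0 < t → α * Real.exp (2 * t) ≤ N k := fun ht => by
    have hk : 1 ≤ k := Nat.one_le_iff_ne_zero.2 fun h => by simp [t, h] at ht
    have hexp : Real.exp (2 * t) = a ^ (2 * k) := by
      rw [show 2 * t = ((2 * k : ℕ) : ℝ) * Real.log a by push_cast; ring, Real.exp_nat_mul,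
        Real.exp_log ha0]
    rw [hexp]
    exact hN k hk
  have hNk0 : N k ≠ 0 := by
    rcases Nat.eq_zero_or_pos k with hk | hk
    · rwa [hk]
    · exact_mod_cast ((by positivity : 0 < α * a ^ (2 * k)).trans_le (hN k hk)).ne'
  obtain ⟨ℓ, hℓ, hcos⟩ := exists_lt_cos_pi_div_le_cos_sub hNk0 θ
  refine ⟨k, ℓ, hℓ, ?_⟩
  rw [zPt_eq ha0, hzs, normSq_one_sub_conj_tanh_mul_exp, Complex.normSq_ofReal_mul_exp_mul_I,
    Complex.normSq_ofReal_mul_exp_mul_I, Real.one_sub_tanh_sq, Real.one_sub_tanh_sq]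
  refine mul_le_mul_of_nonneg_right ?_ (by positivity)
  have hcosh := cosh_sq_le_of_le_log ha0 (sub_nonneg.2 hts) (by linarith)
  have hsinh := sinh_mul_sinh_mul_one_sub_cos_le ha0 hα ht hts hst hNk hcos
  have h16 : π ^ 2 * a ^ 2 / (16 * α ^ 2) ≤ π ^ 2 * a ^ 2 / (4 * α ^ 2) := by
    gcongr; norm_num
  linarith

/-- Theorem 2.1, part 2: if `a > 1`, `N(0) = 1`, and `(N(k) a^{-2k})_{k ≥ 1}` is
decreasing with limit `α ∈ (0,∞)`, then with
`K = 1 + (a - a⁻¹)²/4 + π²a²/(4α²)` and `ε₀ = √(1 - 1/K)` one has `ε₀ ∈ (0,1)`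
and every `z ∈ 𝔻` is within pseudohyperbolic distance `ε₀` of a point of `𝒜`;
in particular `𝒜` is an `ε`-net for every `ε ∈ (ε₀, 1)`. -/
theorem nodes_eps_net (a : ℝ) (ha : 1 < a) (N : ℕ → ℕ) (hN0 : N 0 = 1)
    (hdec : ∀ k, 1 ≤ k →
      (N (k + 1) : ℝ) * (a ^ (2 * (k + 1)))⁻¹ ≤ (N k : ℝ) * (a ^ (2 * k))⁻¹)
    (α : ℝ) (hαpos : 0 < α)
    (hα : Tendsto (fun k : ℕ => (N k : ℝ) * (a ^ (2 * k))⁻¹) atTop (nhds α)) :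
    0 < Real.sqrt (1 - 1 / (1 + (a - a⁻¹) ^ 2 / 4 + Real.pi ^ 2 * a ^ 2 / (4 * α ^ 2))) ∧
    Real.sqrt (1 - 1 / (1 + (a - a⁻¹) ^ 2 / 4 + Real.pi ^ 2 * a ^ 2 / (4 * α ^ 2))) < 1 ∧
    (∀ z : ℂ, ‖z‖ < 1 →
      ∃ w ∈ {w : ℂ | ∃ k ℓ, ℓ < N k ∧ w = zPt a N k ℓ},
        ‖z - w‖ / ‖1 - conj w * z‖ ≤
          Real.sqrt (1 - 1 / (1 + (a - a⁻¹) ^ 2 / 4 + Real.pi ^ 2 * a ^ 2 / (4 * α ^ 2)))) ∧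
    (∀ ε : ℝ,
      Real.sqrt (1 - 1 / (1 + (a - a⁻¹) ^ 2 / 4 + Real.pi ^ 2 * a ^ 2 / (4 * α ^ 2))) < ε →
      ε < 1 →
      ∀ z : ℂ, ‖z‖ < 1 →
        ∃ w ∈ {w : ℂ | ∃ k ℓ, ℓ < N k ∧ w = zPt a N k ℓ},
          ‖z - w‖ / ‖1 - conj w * z‖ < ε) := by
  have ha0 : 0 < a := one_pos.trans ha
  have hN : ∀ k, 1 ≤ k → α * a ^ (2 * k) ≤ N k := fun k hk =>
    (le_mul_inv_iff₀ (by positivity)).1 (le_of_tendsto_of_succ_le hdec hα hk)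
  set K := 1 + (a - a⁻¹) ^ 2 / 4 + π ^ 2 * a ^ 2 / (4 * α ^ 2)
  have hK : 1 < K := by
    have : 0 < π ^ 2 * a ^ 2 / (4 * α ^ 2) := by positivity
    simp only [K]
    linarith [sq_nonneg (a - a⁻¹)]
  have hnet : ∀ z : ℂ, ‖z‖ < 1 → ∃ w ∈ {w : ℂ | ∃ k ℓ, ℓ < N k ∧ w = zPt a N k ℓ},
      ‖z - w‖ / ‖1 - conj w * z‖ ≤ √(1 - 1 / K) := fun z hz => by
    obtain ⟨k, ℓ, hℓ, hle⟩ := exists_zPt_normSq_one_sub_conj_mul_le ha hαpos (by omega) hN hz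
    exact ⟨_, ⟨k, ℓ, hℓ, rfl⟩,
      norm_sub_div_norm_one_sub_conj_mul_le_sqrt hz (norm_zPt_lt_one ha0 N k ℓ) hle⟩
  have hK' : 0 < 1 / K ∧ 1 / K < 1 := ⟨by positivity, (div_lt_one (by positivity)).2 hK⟩
  refine ⟨Real.sqrt_pos.2 (by linarith), (Real.sqrt_lt' one_pos).2 (by linarith), hnet,
    fun ε hε _ z hz => ?_⟩
  obtain ⟨w, hw, hle⟩ := hnet z hz
  exact ⟨w, hw, hle.trans_lt hε⟩
end

section
/- Let a > 1 and r_k = (aᵏ − a^{−k})/(aᵏ + a^{−k}) for k ∈ ℕ. Then for every k ≥ 0 and every z ∈ 𝔻, the action of the representation operator U_{(r₁,1)⁻¹} on the normalized kernel φ_k(z) = (1 − r_k²)/(1 − r_k z)² satisfies the identity ((1 − r₁²)/(1 − r₁ z)²) · (1 − r_k²)/(1 − r_k·(z − r₁)/(1 − r₁ z))² = (1 − r_{k+1}²)/(1 − r_{k+1} z)²; i.e., U_{(r₁,1)⁻¹} maps the level-k kernel function to the level-(k+1) kernel function, so the resolution levels are nested under the hyperbolic dilation. -/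
/-! `φ_r z = (1 - r²)/(1 - rz)²` is the derivative of the disc automorphism
`B_r z = (z - r)/(1 - rz)`, and `B_s ∘ B_r = B_t` for `t = (r + s)/(1 + rs)`, which is the
addition law of `r_k = tanh (k log a)`. The identity is the chain rule for this composition,
verified algebraically. -/

open Complex

section Kernel

variable {K : Type*} [Field K]

def normalizedKernel (r z : K) : K := (1 - r ^ 2) / (1 - r * z) ^ 2

theorem normalizedKernel_mul_normalizedKernel_moebius {r s t z : K}
    (hrst : r + s = t * (1 + r * s)) (hrz : 1 - r * z ≠ 0)
    (hrs : 1 + r * s ≠ 0) :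
    normalizedKernel r z * normalizedKernel s ((z - r) / (1 - r * z)) = normalizedKernel t z := by
  have hden : 1 - s * ((z - r) / (1 - r * z)) = (1 + r * s) * (1 - t * z) / (1 - r * z) := by
    have hB : (z - r) / (1 - r * z) * (1 - r * z) = z - r := div_mul_cancel₀ _ hrz
    rw [eq_div_iff hrz]
    linear_combination -z * hrst - s * hB
  -- `(1 - r²)(1 - s²) = (1 + rs)² - (r + s)²`
  have hnum : (1 - r ^ 2) * (1 - s ^ 2) = (1 + r * s) ^ 2 * (1 - t ^ 2) := by
    linear_combination (-(r + s) - t * (1 + r * s)) * hrst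
  simp only [normalizedKernel]
  rw [hden]
  field_simp
  rw [hnum]

end Kernel

theorem one_sub_mul_ne_zero_of_norm {R : Type*} [NormedRing R] [NormOneClass R] {x y : R}
    (hx : ‖x‖ ≤ 1) (hy : ‖y‖ < 1) : 1 - x * y ≠ 0 := by
  intro h
  have hxy : ‖x * y‖ < 1 :=
    (norm_mul_le x y).trans_lt (mul_lt_one_of_nonneg_of_lt_one_right hx (norm_nonneg y) hy)
  rw [← sub_eq_zero.mp h, norm_one] at hxy
  exact lt_irrefl _ hxy

section rPt

variable {a : ℝ}

theorem abs_rPt_lt_one (ha : 0 < a) (k : ℕ) : |rPt a k| < 1 := by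
  have hx : 0 < a ^ k := pow_pos ha k
  have hy : 0 < (a ^ k)⁻¹ := inv_pos.mpr hx
  rw [rPt, abs_div, abs_of_pos (add_pos hx hy), div_lt_one (add_pos hx hy), abs_sub_lt_iff]
  constructor <;> linarith

theorem rPt_add_rPt (ha : 0 < a) (m n : ℕ) :
    rPt a m + rPt a n = rPt a (m + n) * (1 + rPt a m * rPt a n) := by
  have hm : 0 < a ^ m := pow_pos ha m
  have hn : 0 < a ^ n := pow_pos ha n
  simp only [rPt, pow_add]
  field_simp
  ring

end rPt

/-- The representation operator `U_{(r₁,1)⁻¹}` maps the level-`k` normalized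
kernel `φ_k(z) = (1 - r_k²)/(1 - r_k z)²` to the level-`(k+1)` kernel:
`((1 - r₁²)/(1 - r₁z)²) · (1 - r_k²)/(1 - r_k (z - r₁)/(1 - r₁z))²
  = (1 - r_{k+1}²)/(1 - r_{k+1} z)²`, so the resolution levels are nested under
the hyperbolic dilation. -/
theorem dilation_maps_kernels (a : ℝ) (ha : 1 < a) (k : ℕ) (z : ℂ)
    (hz : ‖z‖ < 1) :
    ((1 - (rPt a 1 : ℂ) ^ 2) / (1 - (rPt a 1 : ℂ) * z) ^ 2) *
        ((1 - (rPt a k : ℂ) ^ 2) /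
          (1 - (rPt a k : ℂ) * ((z - (rPt a 1 : ℂ)) / (1 - (rPt a 1 : ℂ) * z))) ^ 2) =
      (1 - (rPt a (k + 1) : ℂ) ^ 2) / (1 - (rPt a (k + 1) : ℂ) * z) ^ 2 := by
  have ha₀ : 0 < a := zero_lt_one.trans ha
  have hnorm (n : ℕ) : ‖(rPt a n : ℂ)‖ < 1 := by
    simpa only [norm_real, Real.norm_eq_abs] using abs_rPt_lt_one ha₀ n
  have hadd : (rPt a 1 : ℂ) + rPt a k = rPt a (k + 1) * (1 + rPt a 1 * rPt a k) := by
    rw [add_comm k]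
    exact_mod_cast rPt_add_rPt ha₀ 1 k
  have hrs : 1 + (rPt a 1 : ℂ) * rPt a k ≠ 0 := by
    have h := one_sub_mul_ne_zero_of_norm (norm_neg (rPt a 1 : ℂ) ▸ (hnorm 1).le) (hnorm k)
    rwa [neg_mul, sub_neg_eq_add] at h
  exact normalizedKernel_mul_normalizedKernel_moebius hadd
    (one_sub_mul_ne_zero_of_norm (hnorm 1).le hz) hrs
end
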